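/- arXiv:1206.1757 — 2 statements merged into one kernel-verified Lean document; each statement's English description precedes it below -/
import Mathlib

section
/- The binormal vector 𝐁 = 𝛑 − (γ/(|𝐪||𝛍|²))(𝛍×𝐪) is an integral of motion along any solution of the Kepler equations on S³ lying in TS³ with −1 < q0(t) < 1, 𝐪(t) ≠ 0 and 𝛍 ≠ 0; moreover, at every point of TS³ with 𝐪 ≠ 0 and 𝛍 ≠ 0 one has 𝐀 = 𝐁×𝛍, 𝐀·𝛍 = 0 and 𝐁·𝛍 = 0. -/
/-!
Along a solution the spatial part of the equations of motion reads `𝐯̇ = -λ 𝐪`, so `𝛍 = 𝐪 × 𝐯`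
is conserved, and on `S³` one has `(1 - q₀²)^{3/2} = |𝐪|³`, whence `𝛑̇ = -γ 𝐪 / |𝐪|³`.
The correction term of `𝐁` is `(γ / |𝛍|²) 𝛍 × 𝐮` with `𝐮 = 𝐪 / |𝐪|`; since
`𝐮̇ = (𝛍 × 𝐪) / |𝐪|³` and `𝛍 × (𝛍 × 𝐪) = -|𝛍|² 𝐪` (as `𝛍 ⊥ 𝐪`), its derivative is
`-γ 𝐪 / |𝐪|³` as well, so `𝐁̇ = 0`. The identities are the vector algebra
`(𝛍 × 𝐪) × 𝛍 = |𝛍|² 𝐪` together with `𝐪, 𝐯, 𝛑 ⊥ 𝛍`.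
-/

open Matrix Real

noncomputable section

/-- The spatial (last three) components of a vector in `ℝ⁴`. -/
def sp (q : Fin 4 → ℝ) : Fin 3 → ℝ := fun i => q i.succ

/-- The Euclidean norm on `ℝ³`, written via the dot product. -/
def nrm3 (x : Fin 3 → ℝ) : ℝ := Real.sqrt (x ⬝ᵥ x)

/-- The first standard basis vector `e₀ = (1,0,0,0)` of `ℝ⁴`. -/
def e0 : Fin 4 → ℝ := fun i => if i = 0 then 1 else 0

/-- The (constraint set defining the) tangent bundle `TS³ ⊂ ℝ⁴ × ℝ⁴`. -/
def TS3 : Set ((Fin 4 → ℝ) × (Fin 4 → ℝ)) :=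
  {p | p.1 ⬝ᵥ p.1 = 1 ∧ p.1 ⬝ᵥ p.2 = 0}

/-- Right hand side of the Kepler equations of motion on `S³`:
`v̇ = γ e₀/(1-q₀²)^{3/2} - (⟨v,v⟩ + γ q₀/(1-q₀²)^{3/2}) q`. -/
def keplerRHS (γ : ℝ) (q v : Fin 4 → ℝ) : Fin 4 → ℝ :=
  (γ / (1 - q 0 ^ 2) ^ ((3 : ℝ) / 2)) • e0
    - (v ⬝ᵥ v + γ * q 0 / (1 - q 0 ^ 2) ^ ((3 : ℝ) / 2)) • q

/-- The Kepler Hamiltonian on `S³`: `H = ½⟨v,v⟩ - γ q₀ / (1-q₀²)^{1/2}`. -/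
def Hham (γ : ℝ) (p : (Fin 4 → ℝ) × (Fin 4 → ℝ)) : ℝ :=
  (1 / 2) * (p.2 ⬝ᵥ p.2) - γ * p.1 0 / Real.sqrt (1 - p.1 0 ^ 2)

/-- The angular momentum `𝛍 = 𝐪 × 𝐯`. -/
def mu (p : (Fin 4 → ℝ) × (Fin 4 → ℝ)) : Fin 3 → ℝ :=
  crossProduct (sp p.1) (sp p.2)

/-- The vector `𝛑 = q₀ 𝐯 - v₀ 𝐪`. -/
def pivec (p : (Fin 4 → ℝ) × (Fin 4 → ℝ)) : Fin 3 → ℝ :=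
  p.1 0 • sp p.2 - p.2 0 • sp p.1

/-- The Runge–Lenz vector `𝐀 = 𝛑 × 𝛍 - γ 𝐪/|𝐪|`. -/
def rl (γ : ℝ) (p : (Fin 4 → ℝ) × (Fin 4 → ℝ)) : Fin 3 → ℝ :=
  crossProduct (pivec p) (mu p) - (γ / nrm3 (sp p.1)) • sp p.1

/-- The energy-like integral `E = H - |𝛍|²/2`. -/
def Een (γ : ℝ) (p : (Fin 4 → ℝ) × (Fin 4 → ℝ)) : ℝ :=
  Hham γ p - (mu p ⬝ᵥ mu p) / 2

/-- `ν = γ / √(-2E)`. -/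
def nuLS (γ : ℝ) (p : (Fin 4 → ℝ) × (Fin 4 → ℝ)) : ℝ :=
  γ / Real.sqrt (-2 * Een γ p)


/-- The binormal vector `𝐁 = 𝛑 - (γ/(|𝐪||𝛍|²)) (𝛍 × 𝐪)`. -/
def bnv (γ : ℝ) (p : (Fin 4 → ℝ) × (Fin 4 → ℝ)) : Fin 3 → ℝ :=
  pivec p - (γ / (nrm3 (sp p.1) * (mu p ⬝ᵥ mu p))) • crossProduct (mu p) (sp p.1)

theorem dotProduct_self_pos {ι R : Type*} [Fintype ι] [Ring R] [LinearOrder R]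
    [IsStrictOrderedRing R] {x : ι → R} (hx : x ≠ 0) : 0 < x ⬝ᵥ x :=
  (Finset.sum_nonneg fun i _ => mul_self_nonneg (x i)).lt_of_ne' (dotProduct_self_eq_zero.not.2 hx)

theorem cross_cross_self_of_dotProduct_eq_zero {R : Type*} [CommRing R] {u w : Fin 3 → R}
    (h : u ⬝ᵥ w = 0) : u ⨯₃ (u ⨯₃ w) = -(u ⬝ᵥ u) • w := by
  rw [cross_cross_eq_smul_sub_smul', h, zero_smul, zero_sub, neg_smul]

theorem HasDerivAt.dotProduct {𝕜 ι : Type*} [NontriviallyNormedField 𝕜] [Fintype ι]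
    {f g : 𝕜 → ι → 𝕜} {f' g' : ι → 𝕜} {t : 𝕜}
    (hf : HasDerivAt f f' t) (hg : HasDerivAt g g' t) :
    HasDerivAt (fun s => f s ⬝ᵥ g s) (f' ⬝ᵥ g t + f t ⬝ᵥ g') t := by
  simp only [_root_.dotProduct, ← Finset.sum_add_distrib]
  exact HasDerivAt.fun_sum fun i _ => (hasDerivAt_pi.1 hf i).mul (hasDerivAt_pi.1 hg i)

theorem HasDerivAt.crossProduct {𝕜 : Type*} [NontriviallyNormedField 𝕜] [CompleteSpace 𝕜]
    {f g : 𝕜 → Fin 3 → 𝕜} {f' g' : Fin 3 → 𝕜} {t : 𝕜}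
    (hf : HasDerivAt f f' t) (hg : HasDerivAt g g' t) :
    HasDerivAt (fun s => f s ⨯₃ g s) (f t ⨯₃ g' + f' ⨯₃ g t) t := by
  let B : (Fin 3 → 𝕜) →L[𝕜] (Fin 3 → 𝕜) →L[𝕜] Fin 3 → 𝕜 :=
    LinearMap.toContinuousLinearMap
      (LinearMap.toContinuousLinearMap.toLinearMap ∘ₗ _root_.crossProduct)
  simpa [B] using B.hasDerivAt_of_bilinear (fun _ => hf) (fun _ => hg)

theorem HasDerivAt.inv_nrm3_smul {x : ℝ → Fin 3 → ℝ} {x' : Fin 3 → ℝ} {t : ℝ}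
    (hx : HasDerivAt x x' t) (h0 : x t ≠ 0) :
    HasDerivAt (fun s => (nrm3 (x s))⁻¹ • x s) ((nrm3 (x t) ^ 3)⁻¹ • (x t ⨯₃ x' ⨯₃ x t)) t := by
  have hpos := dotProduct_self_pos h0
  have hr : nrm3 (x t) ≠ 0 := (Real.sqrt_pos.2 hpos).ne'
  have hr2 : nrm3 (x t) ^ 2 = x t ⬝ᵥ x t := Real.sq_sqrt hpos.le
  refine ((((hx.dotProduct hx).sqrt hpos.ne').inv hr).smul hx).congr_deriv ?_
  change (nrm3 (x t))⁻¹ • x'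
      + (-((x' ⬝ᵥ x t + x t ⬝ᵥ x') / (2 * nrm3 (x t))) / nrm3 (x t) ^ 2) • x t = _
  rw [cross_cross_eq_smul_sub_smul, dotProduct_comm x' (x t), ← hr2]
  ext i
  simp only [Pi.add_apply, Pi.sub_apply, Pi.smul_apply, smul_eq_mul]
  field_simp
  ring

theorem Convex.eq_of_hasDerivAt_eq_zero {E : Type*} [NormedAddCommGroup E] [NormedSpace ℝ E]
    {I : Set ℝ} (hI : Convex ℝ I) {f : ℝ → E} (hf : ∀ t ∈ I, HasDerivAt f 0 t)
    {s t : ℝ} (hs : s ∈ I) (ht : t ∈ I) : f s = f t := by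
  have h := hI.norm_image_sub_le_of_norm_hasDerivWithin_le
    (fun u hu => (hf u hu).hasDerivWithinAt) (fun _ _ => norm_zero.le) ht hs
  rwa [zero_mul, norm_le_zero_iff, sub_eq_zero] at h

theorem HasDerivAt.sp {f : ℝ → Fin 4 → ℝ} {f' : Fin 4 → ℝ} {t : ℝ} (hf : HasDerivAt f f' t) :
    HasDerivAt (fun s => sp (f s)) (sp f') t :=
  hasDerivAt_pi.2 fun i => hasDerivAt_pi.1 hf i.succ

/-- The multiplier `λ` in `v̇ = γ e₀ / (1 - q₀²)^{3/2} - λ q`. -/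
def lagrangeMult (γ : ℝ) (q v : Fin 4 → ℝ) : ℝ :=
  v ⬝ᵥ v + γ * q 0 / (1 - q 0 ^ 2) ^ ((3 : ℝ) / 2)

theorem sp_keplerRHS (γ : ℝ) (q v : Fin 4 → ℝ) :
    sp (keplerRHS γ q v) = -lagrangeMult γ q v • sp q := by
  ext i
  simp only [sp, keplerRHS, lagrangeMult, e0, Pi.sub_apply, Pi.smul_apply, Fin.succ_ne_zero,
    if_false, smul_eq_mul, mul_zero, zero_sub]
  ring

theorem keplerRHS_zero (γ : ℝ) (q v : Fin 4 → ℝ) :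
    keplerRHS γ q v 0 = γ / (1 - q 0 ^ 2) ^ ((3 : ℝ) / 2) - lagrangeMult γ q v * q 0 := by
  simp [keplerRHS, lagrangeMult, e0]

theorem one_sub_sq_rpow_eq_nrm3_pow {q : Fin 4 → ℝ} (hq : q ⬝ᵥ q = 1) :
    (1 - q 0 ^ 2) ^ ((3 : ℝ) / 2) = nrm3 (sp q) ^ 3 := by
  have h : sp q ⬝ᵥ sp q = 1 - q 0 ^ 2 := by
    rw [← hq, eq_sub_iff_add_eq', dotProduct, dotProduct, Fin.sum_univ_succ, sq]
    rfl
  have h0 : 0 ≤ sp q ⬝ᵥ sp q := by simpa using dotProduct_star_self_nonneg (sp q)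
  rw [nrm3, Real.sqrt_eq_rpow, ← Real.rpow_mul_natCast h0, h]
  norm_num

theorem hasDerivAt_mu {γ t : ℝ} {q v : ℝ → Fin 4 → ℝ} (hq : HasDerivAt q (v t) t)
    (hv : HasDerivAt v (keplerRHS γ (q t) (v t)) t) :
    HasDerivAt (fun s => mu (q s, v s)) 0 t := by
  refine (hq.sp.crossProduct hv.sp).congr_deriv ?_
  rw [sp_keplerRHS, map_smul, cross_self, cross_self, smul_zero, add_zero]

theorem hasDerivAt_pivec {γ t : ℝ} {q v : ℝ → Fin 4 → ℝ} (hq : HasDerivAt q (v t) t)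
    (hv : HasDerivAt v (keplerRHS γ (q t) (v t)) t) (hq1 : q t ⬝ᵥ q t = 1) :
    HasDerivAt (fun s => pivec (q s, v s)) (-(γ / nrm3 (sp (q t)) ^ 3) • sp (q t)) t := by
  refine (((hasDerivAt_pi.1 hq 0).smul hv.sp).sub
    ((hasDerivAt_pi.1 hv 0).smul hq.sp)).congr_deriv ?_
  rw [sp_keplerRHS, keplerRHS_zero, one_sub_sq_rpow_eq_nrm3_pow hq1]
  module

theorem bnv_eq_pivec_sub_smul_cross (γ : ℝ) (p : (Fin 4 → ℝ) × (Fin 4 → ℝ)) :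
    bnv γ p = pivec p - (γ / (mu p ⬝ᵥ mu p)) • mu p ⨯₃ ((nrm3 (sp p.1))⁻¹ • sp p.1) := by
  rw [bnv, map_smul, smul_smul, div_mul_eq_div_div, div_right_comm, div_eq_mul_inv]

theorem hasDerivAt_bnv {γ t : ℝ} {q v : ℝ → Fin 4 → ℝ} (hq : HasDerivAt q (v t) t)
    (hv : HasDerivAt v (keplerRHS γ (q t) (v t)) t) (hq1 : q t ⬝ᵥ q t = 1)
    (hsp : sp (q t) ≠ 0) (hmu : mu (q t, v t) ≠ 0) :
    HasDerivAt (fun s => bnv γ (q s, v s)) 0 t := by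
  have hμ := hasDerivAt_mu hq hv
  have hm := (dotProduct_self_pos hmu).ne'
  have hcoef : HasDerivAt (fun s => γ / (mu (q s, v s) ⬝ᵥ mu (q s, v s))) 0 t := by
    simpa using (hasDerivAt_const t γ).fun_div (hμ.dotProduct hμ) hm
  have hμq : mu (q t, v t) ⬝ᵥ sp (q t) = 0 := by rw [dotProduct_comm]; exact dot_self_cross _ _
  simp_rw [bnv_eq_pivec_sub_smul_cross]
  refine ((hasDerivAt_pivec hq hv hq1).sub
    (hcoef.smul (hμ.crossProduct (hq.sp.inv_nrm3_smul hsp)))).congr_deriv ?_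
  change _ - (_ • (mu (q t, v t) ⨯₃ (_ • (mu (q t, v t) ⨯₃ sp (q t))) + _) + _) = _
  rw [map_smul, cross_cross_self_of_dotProduct_eq_zero hμq]
  simp only [map_zero, LinearMap.zero_apply, zero_smul, add_zero, smul_smul]
  rw [← sub_smul]
  convert zero_smul ℝ (sp (q t))
  field_simp
  ring

theorem bnv_cross_mu {γ : ℝ} {p : (Fin 4 → ℝ) × (Fin 4 → ℝ)} (hmu : mu p ≠ 0) :
    bnv γ p ⨯₃ mu p = rl γ p := by
  have hμq : sp p.1 ⬝ᵥ mu p = 0 := dot_self_cross _ _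
  rw [bnv, map_sub, LinearMap.sub_apply, map_smul, LinearMap.smul_apply,
    cross_cross_eq_smul_sub_smul, hμq, zero_smul, sub_zero, smul_smul, div_mul_eq_div_div,
    div_mul_cancel₀ _ (dotProduct_self_pos hmu).ne', rl]

theorem bnv_dotProduct_mu (γ : ℝ) (p : (Fin 4 → ℝ) × (Fin 4 → ℝ)) : bnv γ p ⬝ᵥ mu p = 0 := by
  have hq : sp p.1 ⬝ᵥ mu p = 0 := dot_self_cross _ _
  have hv : sp p.2 ⬝ᵥ mu p = 0 := dot_cross_self _ _
  have hμq : mu p ⨯₃ sp p.1 ⬝ᵥ mu p = 0 := by rw [dotProduct_comm]; exact dot_self_cross _ _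
  simp only [bnv, pivec, sub_dotProduct, smul_dotProduct, hq, hv, hμq, smul_zero, sub_zero]

theorem binormal_is_integral_and_identities_general (γ : ℝ) :
    (∀ (I : Set ℝ), Convex ℝ I → ∀ (q v : ℝ → Fin 4 → ℝ),
      (∀ t ∈ I, HasDerivAt q (v t) t) →
      (∀ t ∈ I, HasDerivAt v (keplerRHS γ (q t) (v t)) t) →
      (∀ t ∈ I, (q t, v t) ∈ TS3) →
      (∀ t ∈ I, -1 < q t 0 ∧ q t 0 < 1) →
      (∀ t ∈ I, sp (q t) ≠ 0) →
      (∀ t ∈ I, mu (q t, v t) ≠ 0) →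
      ∀ t ∈ I, ∀ s ∈ I, bnv γ (q t, v t) = bnv γ (q s, v s)) ∧
    (∀ p ∈ TS3, sp p.1 ≠ 0 → mu p ≠ 0 →
      rl γ p = crossProduct (bnv γ p) (mu p) ∧
      rl γ p ⬝ᵥ mu p = 0 ∧
      bnv γ p ⬝ᵥ mu p = 0) := by
  refine ⟨fun I hI q v hq hv hTS _ hsp hmu t ht s hs => ?_, fun p _ _ hmu => ?_⟩
  · exact hI.eq_of_hasDerivAt_eq_zero (fun u hu => hasDerivAt_bnv (hq u hu) (hv u hu)
      (hTS u hu).1 (hsp u hu) (hmu u hu)) ht hs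
  · rw [← bnv_cross_mu hmu, dotProduct_comm]
    exact ⟨rfl, dot_cross_self _ _, bnv_dotProduct_mu γ p⟩

theorem binormal_is_integral_and_identities (γ : ℝ) (hγ : 0 < γ) :
    (∀ (I : Set ℝ), Convex ℝ I → ∀ (q v : ℝ → Fin 4 → ℝ),
      (∀ t ∈ I, HasDerivAt q (v t) t) →
      (∀ t ∈ I, HasDerivAt v (keplerRHS γ (q t) (v t)) t) →
      (∀ t ∈ I, (q t, v t) ∈ TS3) →
      (∀ t ∈ I, -1 < q t 0 ∧ q t 0 < 1) →
      (∀ t ∈ I, sp (q t) ≠ 0) →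
      (∀ t ∈ I, mu (q t, v t) ≠ 0) →
      ∀ t ∈ I, ∀ s ∈ I, bnv γ (q t, v t) = bnv γ (q s, v s)) ∧
    (∀ p ∈ TS3, sp p.1 ≠ 0 → mu p ≠ 0 →
      rl γ p = crossProduct (bnv γ p) (mu p) ∧
      rl γ p ⬝ᵥ mu p = 0 ∧
      bnv γ p ⬝ᵥ mu p = 0) :=
  binormal_is_integral_and_identities_general γ

end
end

section
/- The Ligon–Schaaf map intertwines E with the Delaunay Hamiltonian: for (q,v) ∈ TS³ with 𝐪 ≠ 0, q0 > 0 and E < 0, and any φ ∈ ℝ, the point (x,y) = (α sinφ + β cosφ, ν(−α cosφ + β sinφ)) satisfies ℋ(x,y) = −γ²/(2⟨y,y⟩) = E(q,v). -/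
open Matrix Real

noncomputable section

/-- The vector `α` of the Ligon–Schaaf map for the Kepler problem on `S³`. -/
def alphaLS (γ : ℝ) (p : (Fin 4 → ℝ) × (Fin 4 → ℝ)) : Fin 4 → ℝ :=
  Fin.cons ((sp p.1 ⬝ᵥ pivec p) / (nuLS γ p * p.1 0))
    ((nrm3 (sp p.1))⁻¹ • sp p.1 - ((sp p.1 ⬝ᵥ pivec p) / (γ * p.1 0)) • pivec p)

/-- The vector `β` of the Ligon–Schaaf map for the Kepler problem on `S³`. -/
def betaLS (γ : ℝ) (p : (Fin 4 → ℝ) × (Fin 4 → ℝ)) : Fin 4 → ℝ :=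
  Fin.cons (nrm3 (sp p.1) / (γ * p.1 0) * (pivec p ⬝ᵥ pivec p) - 1)
    ((nrm3 (sp p.1) / (nuLS γ p * p.1 0)) • pivec p)

/-- The phase `φ = (𝐪·𝛑)/(ν q₀) = α₀` of the Ligon–Schaaf map. -/
def phiLS (γ : ℝ) (p : (Fin 4 → ℝ) × (Fin 4 → ℝ)) : ℝ :=
  (sp p.1 ⬝ᵥ pivec p) / (nuLS γ p * p.1 0)

/-- The Ligon–Schaaf map `Φ` for the Kepler problem on `S³`. -/
def PhiLS (γ : ℝ) (p : (Fin 4 → ℝ) × (Fin 4 → ℝ)) : (Fin 4 → ℝ) × (Fin 4 → ℝ) :=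
  (Real.sin (phiLS γ p) • alphaLS γ p + Real.cos (phiLS γ p) • betaLS γ p,
   nuLS γ p • (-Real.cos (phiLS γ p) • alphaLS γ p + Real.sin (phiLS γ p) • betaLS γ p))

/-! On `TS³` the bivector `q ∧ v` has components `𝛑` and `𝛍`, so `⟨v,v⟩ = |𝛑|² + |𝛍|²` and
`E = |𝛑|²/2 - γ q₀/|𝐪|`: this is exactly the relation `γ²/ν² + |𝛑|² = 2γq₀/|𝐪|` that makes `α` and `β`
orthonormal. Then `y = ν (-cos φ α + sin φ β)` has `⟨y,y⟩ = ν² = -γ²/(2E)`. -/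

lemma Fin.cons_dotProduct_cons {R : Type*} [Mul R] [AddCommMonoid R] {n : ℕ} (a b : R)
    (x y : Fin n → R) : (Fin.cons a x : Fin (n + 1) → R) ⬝ᵥ Fin.cons b y = a * b + x ⬝ᵥ y :=
  Fin.sum_univ_succ _

lemma smul_rotate_dotProduct_self {ι : Type*} [Fintype ι] {a b : ι → ℝ} (ha : a ⬝ᵥ a = 1)
    (hb : b ⬝ᵥ b = 1) (hab : a ⬝ᵥ b = 0) (ν φ : ℝ) :
    (ν • (-Real.cos φ • a + Real.sin φ • b)) ⬝ᵥ (ν • (-Real.cos φ • a + Real.sin φ • b)) = ν ^ 2 := by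
  simp only [add_dotProduct, dotProduct_add, smul_dotProduct, dotProduct_smul, smul_eq_mul,
    dotProduct_comm b a, ha, hb, hab]
  linear_combination ν ^ 2 * Real.sin_sq_add_cos_sq φ

lemma nrm3_sq (x : Fin 3 → ℝ) : nrm3 x ^ 2 = x ⬝ᵥ x :=
  Real.sq_sqrt (dotProduct_self_star_nonneg x)

lemma nrm3_ne_zero {x : Fin 3 → ℝ} (hx : x ≠ 0) : nrm3 x ≠ 0 := by
  rw [nrm3, Real.sqrt_ne_zero']
  exact lt_of_le_of_ne (dotProduct_self_star_nonneg x) (Ne.symm (mt dotProduct_self_eq_zero.mp hx))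

lemma dotProduct_eq_mul_add_sp (w u : Fin 4 → ℝ) : w ⬝ᵥ u = w 0 * u 0 + sp w ⬝ᵥ sp u :=
  Fin.sum_univ_succ _

lemma pivec_dotProduct_self_add_mu_dotProduct_self (p : (Fin 4 → ℝ) × (Fin 4 → ℝ)) :
    pivec p ⬝ᵥ pivec p + mu p ⬝ᵥ mu p = (p.1 ⬝ᵥ p.1) * (p.2 ⬝ᵥ p.2) - (p.1 ⬝ᵥ p.2) ^ 2 := by
  simp only [pivec, mu, cross_dot_cross, dotProduct_eq_mul_add_sp p.1, dotProduct_eq_mul_add_sp p.2,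
    sub_dotProduct, dotProduct_sub, smul_dotProduct, dotProduct_smul, smul_eq_mul,
    dotProduct_comm (sp p.2) (sp p.1)]
  ring

section LigonSchaaf

variable {γ : ℝ} {p : (Fin 4 → ℝ) × (Fin 4 → ℝ)}

lemma Een_eq_of_mem_TS3 (hp : p ∈ TS3) :
    Een γ p = pivec p ⬝ᵥ pivec p / 2 - γ * p.1 0 / nrm3 (sp p.1) := by
  obtain ⟨hqq, hqv⟩ := hp
  have hvv : p.2 ⬝ᵥ p.2 = pivec p ⬝ᵥ pivec p + mu p ⬝ᵥ mu p := by
    rw [pivec_dotProduct_self_add_mu_dotProduct_self, hqq, hqv]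
    ring
  have hsp : 1 - p.1 0 ^ 2 = sp p.1 ⬝ᵥ sp p.1 := by
    rw [← hqq, dotProduct_eq_mul_add_sp]
    ring
  rw [Een, Hham, hvv, hsp, nrm3]
  ring

lemma sqrt_neg_two_mul_Een_sq (hp : p ∈ TS3) (hE : Een γ p < 0) :
    Real.sqrt (-2 * Een γ p) ^ 2 = 2 * γ * p.1 0 / nrm3 (sp p.1) - pivec p ⬝ᵥ pivec p := by
  rw [Real.sq_sqrt (by linarith), Een_eq_of_mem_TS3 hp]
  ring

lemma alphaLS_dotProduct_betaLS (hq : sp p.1 ≠ 0) : alphaLS γ p ⬝ᵥ betaLS γ p = 0 := by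
  have hr := nrm3_ne_zero hq
  simp only [alphaLS, betaLS, Fin.cons_dotProduct_cons, sub_dotProduct, smul_dotProduct,
    dotProduct_smul, smul_eq_mul]
  field_simp
  ring

lemma alphaLS_dotProduct_self (hγ : γ ≠ 0) (hp : p ∈ TS3) (hq : sp p.1 ≠ 0) (hq0 : p.1 0 ≠ 0)
    (hE : Een γ p < 0) : alphaLS γ p ⬝ᵥ alphaLS γ p = 1 := by
  have hr := nrm3_ne_zero hq
  have hs := sqrt_neg_two_mul_Een_sq hp hE
  have hs0 : Real.sqrt (-2 * Een γ p) ≠ 0 := Real.sqrt_ne_zero'.mpr (by linarith)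
  set s := Real.sqrt (-2 * Een γ p)
  have hν : nuLS γ p = γ / s := rfl
  simp only [alphaLS, hν, Fin.cons_dotProduct_cons, sub_dotProduct, dotProduct_sub, smul_dotProduct,
    dotProduct_smul, smul_eq_mul, dotProduct_comm (pivec p) (sp p.1), ← nrm3_sq (sp p.1)]
  field_simp
  rw [hs]
  field_simp
  ring

lemma betaLS_dotProduct_self (hγ : γ ≠ 0) (hp : p ∈ TS3) (hq : sp p.1 ≠ 0) (hq0 : p.1 0 ≠ 0)
    (hE : Een γ p < 0) : betaLS γ p ⬝ᵥ betaLS γ p = 1 := by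
  have hr := nrm3_ne_zero hq
  have hs := sqrt_neg_two_mul_Een_sq hp hE
  have hs0 : Real.sqrt (-2 * Een γ p) ≠ 0 := Real.sqrt_ne_zero'.mpr (by linarith)
  set s := Real.sqrt (-2 * Een γ p)
  have hν : nuLS γ p = γ / s := rfl
  simp only [betaLS, hν, Fin.cons_dotProduct_cons, smul_dotProduct, dotProduct_smul, smul_eq_mul]
  field_simp
  rw [hs]
  field_simp
  ring

lemma neg_sq_div_two_mul_nuLS_sq (hγ : γ ≠ 0) (hE : Een γ p < 0) :
    -γ ^ 2 / (2 * nuLS γ p ^ 2) = Een γ p := by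
  rw [nuLS, div_pow, Real.sq_sqrt (by linarith)]
  field_simp

end LigonSchaaf

theorem LS_map_intertwines_energy (γ : ℝ) (hγ : 0 < γ)
    (p : (Fin 4 → ℝ) × (Fin 4 → ℝ)) (hp : p ∈ TS3) (hqnz : sp p.1 ≠ 0)
    (hq0 : 0 < p.1 0) (hE : Een γ p < 0) (φ : ℝ) :
    -γ ^ 2 / (2 * ((nuLS γ p • (-Real.cos φ • alphaLS γ p + Real.sin φ • betaLS γ p)) ⬝ᵥ
      (nuLS γ p • (-Real.cos φ • alphaLS γ p + Real.sin φ • betaLS γ p)))) = Een γ p := by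
  rw [smul_rotate_dotProduct_self (alphaLS_dotProduct_self hγ.ne' hp hqnz hq0.ne' hE)
    (betaLS_dotProduct_self hγ.ne' hp hqnz hq0.ne' hE) (alphaLS_dotProduct_betaLS hqnz)]
  exact neg_sq_div_two_mul_nuLS_sq hγ.ne' hE
end
end
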